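/- arXiv:2010.15080 — 2 statements merged into one kernel-verified Lean document; each statement's English description precedes it below -/
import Mathlib

section
/- For every natural number n, the n-th Bernoulli–Fibonacci polynomial has the expansion B_n^F(x) = ∑_{j=0}^{n} [n choose j]_F · b_j^F · x^{n−j}, where [n choose j]_F denotes the Fibonomial coefficient and b_j^F = B_j^F(0) are the Bernoulli–Fibonacci numbers. -/
/-- The fibofactorial: `F_n! = F_1 * F_2 * ... * F_n`, with `F_0! = 1`. -/
def fibFact (n : ℕ) : ℕ := ∏ i ∈ Finset.range n, Nat.fib (i + 1)

/-- The Fibonomial coefficient `[n choose k]_F = F_n! / (F_k! * F_{n-k}!)` as a rational. -/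
def fibonomial (n k : ℕ) : ℚ := (fibFact n : ℚ) / ((fibFact k : ℚ) * (fibFact (n - k) : ℚ))

/-!
Evaluating the defining identity at `x = 0` gives `b(z) · E(z) = z`, where `b(z) = ∑ b_n^F z^n/F_n!`
and `E(z) = ∑_{n≥1} z^n/F_n!`. Comparing with `B(x, z) · E(z) = z · e(xz)` and cancelling the
nonzero series `E` yields `B(x, z) = b(z) · e(xz)`, and the coefficient of `z^n / F_n!` in a
product of two such series is the Fibonomial convolution of their coefficients.
-/

open PowerSeries Finset

lemma fibFact_zero : fibFact 0 = 1 := rfl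

lemma fibFact_one : fibFact 1 = 1 := rfl

lemma fibFact_ne_zero (n : ℕ) : fibFact n ≠ 0 :=
  prod_ne_zero_iff.2 fun i _ => (Nat.fib_pos.2 i.succ_pos).ne'

lemma inv_fibFact_mul_fibonomial (n k : ℕ) :
    (fibFact n : ℚ)⁻¹ * fibonomial n k = (fibFact k : ℚ)⁻¹ * (fibFact (n - k) : ℚ)⁻¹ := by
  have := fibFact_ne_zero n
  rw [fibonomial, div_eq_mul_inv, inv_mul_cancel_left₀ (by exact_mod_cast this), mul_inv]

section fibEGF

variable {R S : Type*} [CommRing R] [Algebra ℚ R] [CommRing S] [Algebra ℚ S]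

noncomputable def fibEGF (a : ℕ → R) : R⟦X⟧ :=
  PowerSeries.mk fun n => algebraMap ℚ R (fibFact n : ℚ)⁻¹ * a n

lemma coeff_fibEGF (a : ℕ → R) (n : ℕ) :
    coeff n (fibEGF a) = algebraMap ℚ R (fibFact n : ℚ)⁻¹ * a n :=
  coeff_mk _ _

lemma fibEGF_injective : Function.Injective (fibEGF (R := R)) := by
  intro a b h
  funext n
  have hunit : IsUnit (algebraMap ℚ R (fibFact n : ℚ)⁻¹) :=
    (isUnit_iff_ne_zero.2 (inv_ne_zero (by exact_mod_cast fibFact_ne_zero n))).map _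
  have := congrArg (coeff n) h
  rwa [coeff_fibEGF, coeff_fibEGF, hunit.mul_right_inj] at this

lemma fibEGF_mul (a b : ℕ → R) :
    fibEGF a * fibEGF b = fibEGF fun n =>
      ∑ j ∈ range (n + 1), algebraMap ℚ R (fibonomial n j) * a j * b (n - j) := by
  ext n
  rw [coeff_mul, Nat.sum_antidiagonal_eq_sum_range_succ_mk, coeff_fibEGF, mul_sum]
  refine sum_congr rfl fun j _ => ?_
  have hbinom := congrArg (algebraMap ℚ R) (inv_fibFact_mul_fibonomial n j)
  rw [map_mul, map_mul] at hbinom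
  simp only [coeff_fibEGF]
  linear_combination -(a j * b (n - j)) * hbinom

lemma fibEGF_zero_pow : fibEGF (fun n => (0 : R) ^ n) = 1 := by
  ext n
  rcases n with _ | n <;> simp [coeff_fibEGF, coeff_one, fibFact_zero]

lemma map_fibEGF (φ : R →+* S) (a : ℕ → R) : map φ (fibEGF a) = fibEGF (φ ∘ a) := by
  ext n
  simp [coeff_fibEGF]

variable (R) in
noncomputable def fibEGFPos : R⟦X⟧ :=
  fibEGF fun n => if n = 0 then 0 else 1

lemma fibEGFPos_ne_zero [Nontrivial R] : fibEGFPos R ≠ 0 := fun h => by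
  simpa [fibEGFPos, coeff_fibEGF, fibFact_one] using congrArg (coeff 1) h

lemma map_fibEGFPos (φ : R →+* S) : map φ (fibEGFPos R) = fibEGFPos S := by
  rw [fibEGFPos, map_fibEGF]
  congr 1
  ext n
  split_ifs <;> simp [*]

end fibEGF

/-- For every `n`, `B_n^F(x) = ∑_{j=0}^{n} [n choose j]_F * b_j^F * x^{n-j}`, where
`b_j^F = B_j^F(0)`. Here `B` is the (unique) sequence of Bernoulli–Fibonacci polynomials,
characterized by the generating-function identity
`(∑ B_n(x) z^n/F_n!) * (∑_{n≥1} z^n/F_n!) = z * ∑ x^n z^n/F_n!` in `(ℚ[x])⟦z⟧`. -/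
theorem bernoulliFib_expansion
    (B : ℕ → Polynomial ℚ)
    (hB : (PowerSeries.mk fun n => Polynomial.C ((fibFact n : ℚ)⁻¹) * B n) *
          (PowerSeries.mk fun n =>
            if n = 0 then 0 else Polynomial.C ((fibFact n : ℚ)⁻¹)) =
          PowerSeries.X *
          PowerSeries.mk (fun n => Polynomial.C ((fibFact n : ℚ)⁻¹) * Polynomial.X ^ n))
    (n : ℕ) :
    B n = ∑ j ∈ Finset.range (n + 1),
      Polynomial.C (fibonomial n j * (B j).eval 0) * Polynomial.X ^ (n - j) := by
  have hgen : fibEGF B * fibEGFPos _ = X * fibEGF (Polynomial.X ^ ·) := by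
    convert hB using 2 <;> ext n
    all_goals simp [fibEGFPos, coeff_fibEGF, Polynomial.algebraMap_eq]
  let evalZero := Polynomial.C.comp (Polynomial.evalRingHom (0 : ℚ))
  have hnum : fibEGF (evalZero ∘ B) * fibEGFPos _ = X := by
    simpa [map_fibEGF, map_fibEGFPos, Function.comp_def, evalZero, fibEGF_zero_pow]
      using congrArg (map evalZero) hgen
  have hfactor : fibEGF B = fibEGF (evalZero ∘ B) * fibEGF (Polynomial.X ^ ·) := by
    refine mul_right_cancel₀ fibEGFPos_ne_zero ?_
    rw [hgen, mul_right_comm, hnum]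
  rw [fibEGF_mul] at hfactor
  rw [congrFun (fibEGF_injective hfactor) n]
  simp [evalZero, Polynomial.algebraMap_eq, mul_assoc]
end

section
/- For every integer n ≥ 1, the Bernoulli–Fibonacci polynomials satisfy the recursion ∑_{l=0}^{n−1} [n choose l]_F · B_l^F(x) = F_n · x^{n−1} (an identity in the polynomial ring ℚ[x]). -/
/-!
Comparing the coefficients of `z^n` on both sides of the generating-function identity gives
`∑_{l<n} B_l / (F_l! F_{n-l}!) = x^{n-1} / F_{n-1}!`, the `l = n` term vanishing because the
second factor has no constant term. Multiplying by `F_n!` turns the left side into the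
Fibonomial sum and the right side into `F_n x^{n-1}`, since `F_n! = F_{n-1}! F_n`.
-/

open Finset

lemma PowerSeries.coeff_succ_mul_of_constantCoeff_eq_zero {R : Type*} [CommSemiring R]
    (f g : PowerSeries R) (hg : PowerSeries.constantCoeff g = 0) (n : ℕ) :
    PowerSeries.coeff (n + 1) (f * g) =
      ∑ i ∈ range (n + 1), PowerSeries.coeff i f * PowerSeries.coeff (n + 1 - i) g := by
  rw [PowerSeries.coeff_mul, Nat.sum_antidiagonal_eq_sum_range_succ_mk, sum_range_succ]
  simp [hg]

lemma fibFact_succ (n : ℕ) : fibFact (n + 1) = fibFact n * Nat.fib (n + 1) :=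
  prod_range_succ _ _

lemma fibFact_cast_ne_zero (n : ℕ) : (fibFact n : ℚ) ≠ 0 := by
  exact_mod_cast (prod_pos fun i _ => Nat.fib_pos.2 (Nat.succ_pos i)).ne'

lemma fibFact_succ_mul_inv (n : ℕ) :
    (fibFact (n + 1) : ℚ) * (fibFact n : ℚ)⁻¹ = Nat.fib (n + 1) := by
  rw [fibFact_succ, Nat.cast_mul, mul_right_comm, mul_inv_cancel₀ (fibFact_cast_ne_zero n),
    one_mul]

lemma fibonomial_eq_mul_inv (n k : ℕ) :
    fibonomial n k = fibFact n * ((fibFact k : ℚ)⁻¹ * (fibFact (n - k) : ℚ)⁻¹) := by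
  rw [fibonomial, div_eq_mul_inv, mul_inv]

/-- For every `n ≥ 1`, `∑_{l=0}^{n-1} [n choose l]_F * B_l^F(x) = F_n * x^{n-1}` in `ℚ[x]`.
Here `B` is the (unique) sequence of Bernoulli–Fibonacci polynomials, characterized by the
generating-function identity
`(∑ B_n(x) z^n/F_n!) * (∑_{n≥1} z^n/F_n!) = z * ∑ x^n z^n/F_n!` in `(ℚ[x])⟦z⟧`. -/
theorem bernoulliFib_recursion
    (B : ℕ → Polynomial ℚ)
    (hB : (PowerSeries.mk fun n => Polynomial.C ((fibFact n : ℚ)⁻¹) * B n) *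
          (PowerSeries.mk fun n =>
            if n = 0 then 0 else Polynomial.C ((fibFact n : ℚ)⁻¹)) =
          PowerSeries.X *
          PowerSeries.mk (fun n => Polynomial.C ((fibFact n : ℚ)⁻¹) * Polynomial.X ^ n))
    (n : ℕ) (hn : 1 ≤ n) :
    ∑ l ∈ Finset.range n, Polynomial.C (fibonomial n l) * B l =
      Polynomial.C ((Nat.fib n : ℚ)) * Polynomial.X ^ (n - 1) := by
  obtain ⟨m, rfl⟩ := Nat.exists_eq_add_of_le' hn
  have hcoeff := congrArg (PowerSeries.coeff (m + 1)) hB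
  rw [PowerSeries.coeff_succ_mul_of_constantCoeff_eq_zero _ _ (by simp),
    PowerSeries.coeff_succ_X_mul] at hcoeff
  simp only [PowerSeries.coeff_mk] at hcoeff
  open Polynomial in
  calc ∑ l ∈ range (m + 1), C (fibonomial (m + 1) l) * B l
      = C (fibFact (m + 1) : ℚ) * ∑ l ∈ range (m + 1), C ((fibFact l : ℚ)⁻¹) * B l *
          if m + 1 - l = 0 then 0 else C ((fibFact (m + 1 - l) : ℚ)⁻¹) := by
        rw [mul_sum]
        refine sum_congr rfl fun l hl => ?_
        rw [if_neg (by rw [mem_range] at hl; omega), fibonomial_eq_mul_inv, map_mul, map_mul]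
        ring
    _ = C (fibFact (m + 1) : ℚ) * (C ((fibFact m : ℚ)⁻¹) * X ^ m) := by rw [hcoeff]
    _ = C (Nat.fib (m + 1) : ℚ) * X ^ (m + 1 - 1) := by
        rw [← mul_assoc, ← map_mul, fibFact_succ_mul_inv, Nat.add_sub_cancel]
end
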